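/- For positive integers r and s, the descent polynomial A_𝐦(x,y) of the multiset with r letters of multiplicity 1 and s letters of multiplicity 2 equals G^s(T^r(x)), where T = xy(∂_x+∂_y) and G = xy²(∂_x+∂_y) + (x²y²/2)(∂_x²+∂_y²) + x²y² ∂_x∂_y; in particular, by the commutativity TG = GT, A_𝐦(x,y) depends only on r and s and not on the order of the multiplicities. -/

import Mathlib

/-!
Build `𝐦` by appending one value `L` at a time, larger than every letter already present. Weight
gap `j` of an arrangement `w` (between consecutive letters of `0 w 0`) by `y` if it is a descent
and by `x` otherwise. Putting `L` into a descent gap keeps `des`, putting it into an ascent gap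
raises `des` by one, so summing over the `m + 1` gaps multiplies `x^d y^e` by `d y + e x`: this is
`T (x^d y^e)`. Two copies of `L` either occupy distinct gaps `k < j` or sit side by side in one gap
`j`, where the second copy adds a letter but no descent; with `u_j` the gap weights, the sum
`x^d y^e (Σ_{k<j} u_k u_j + y Σ_j u_j)` equals `G (x^d y^e)` because
`2 Σ_{k<j} u_k u_j = (Σ_j u_j)² - Σ_j u_j²`. Since `T` and `G` commute, induction over `𝐦` gives
`A_𝐦 = G^s T^r (y)`, and `T y = T x`.
-/

open MvPolynomial

/-- Number of descents in `a :: rest`, counting consecutive pairs. -/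
def desAux : List ℕ → ℕ
  | a :: b :: t => (if b < a then 1 else 0) + desAux (b :: t)
  | _ => 0

/-- The descent number of a word `w = π₁…π_m`, with the boundary convention
`π₀ = π_{m+1} = 0`. -/
def des (w : List ℕ) : ℕ := desAux (0 :: (w ++ [0]))

/-- The list of all distinct arrangements (multipermutations) of a multiset. -/
noncomputable def arrangements (M : Multiset ℕ) : List (List ℕ) :=
  M.toList.permutations.dedup

/-- The multiset `{1^{m₁}, 2^{m₂}, …, n^{m_n}}` encoded by the list of
multiplicities `ms = [m₁, …, m_n]`. -/
def msetOf (ms : List ℕ) : Multiset ℕ :=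
  ((List.range ms.length).flatMap fun i => List.replicate (ms.getD i 0) (i + 1) : List ℕ)

/-- The homogenized multiset Eulerian polynomial
`A_𝐦(x,y) = Σ_π x^{des π} y^{m+1-des π}`. -/
noncomputable def Abi (ms : List ℕ) : MvPolynomial (Fin 2) ℚ :=
  ((arrangements (msetOf ms)).map fun w =>
    X 0 ^ des w * X 1 ^ ((msetOf ms).card + 1 - des w)).sum

/-- The multiset Eulerian polynomial `A_𝐦(x) = Σ_π x^{des π}`. -/
noncomputable def Auni (ms : List ℕ) : Polynomial ℚ :=
  ((arrangements (msetOf ms)).map fun w => Polynomial.X ^ des w).sum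

/-- The Eulerian operator `T = xy(∂/∂x + ∂/∂y)`. -/
noncomputable def Teul (f : MvPolynomial (Fin 2) ℚ) : MvPolynomial (Fin 2) ℚ :=
  X 0 * X 1 * (pderiv (0 : Fin 2) f + pderiv (1 : Fin 2) f)

/-- The Eulerian operator `G = xy²(∂_x+∂_y) + (x²y²/2)(∂_x²+∂_y²) + x²y² ∂_x∂_y`. -/
noncomputable def Gop (f : MvPolynomial (Fin 2) ℚ) : MvPolynomial (Fin 2) ℚ :=
  X 0 * X 1 ^ 2 * (pderiv (0 : Fin 2) f + pderiv (1 : Fin 2) f)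
    + C (1 / 2 : ℚ) * (X 0 ^ 2 * X 1 ^ 2) *
        (pderiv (0 : Fin 2) (pderiv (0 : Fin 2) f) + pderiv (1 : Fin 2) (pderiv (1 : Fin 2) f))
    + X 0 ^ 2 * X 1 ^ 2 * pderiv (0 : Fin 2) (pderiv (1 : Fin 2) f)

namespace List

variable {α : Type*}

theorem getD_eq_default_or_mem (l : List α) (j : ℕ) (d : α) :
    l.getD j d = d ∨ l.getD j d ∈ l := by
  rcases lt_or_ge j l.length with h | h
  · exact .inr (getD_eq_getElem l d h ▸ getElem_mem h)
  · exact .inl (getD_eq_default l d h)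

theorem getD_append_singleton_default (l : List α) (j : ℕ) (d : α) :
    (l ++ [d]).getD j d = l.getD j d := by
  rcases lt_or_ge j l.length with h | h
  · exact getD_append l _ d j h
  · rw [getD_append_right l _ d j h, getD_eq_default l d h, getD_eq_getElem?_getD,
      getElem?_getD_singleton_default_eq]

theorem getD_insertIdx_of_lt (l : List α) (a d : α) {j k : ℕ} (hk : k < j) :
    (l.insertIdx j a).getD k d = l.getD k d := by
  rw [getD_eq_getElem?_getD, getD_eq_getElem?_getD, getElem?_insertIdx_of_lt hk]

theorem getD_lt_of_forall_lt {w : List ℕ} {a : ℕ} (hw : ∀ x ∈ w, x < a) (ha : 0 < a) (j : ℕ) :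
    w.getD j 0 < a :=
  (w.getD_eq_default_or_mem j 0).elim (fun h => h.symm ▸ ha) (hw _)

variable [DecidableEq α]

theorem idxOf_insertIdx_of_le_idxOf {a : α} :
    ∀ {w : List α} {k : ℕ}, k ≤ w.idxOf a → (w.insertIdx k a).idxOf a = k
  | _, 0, _ => by simp
  | [], _ + 1, h => by simp at h
  | x :: w, k + 1, h => by
    have hx : x ≠ a := by rintro rfl; simp at h
    rw [idxOf_cons_ne _ hx] at h
    rw [insertIdx_succ_cons, idxOf_cons_ne _ hx, idxOf_insertIdx_of_le_idxOf (by omega)]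

theorem erase_insertIdx_of_le_idxOf {a : α} {w : List α} {k : ℕ} (h : k ≤ w.idxOf a) :
    (w.insertIdx k a).erase a = w := by
  rw [erase_eq_eraseIdx_of_idxOf (idxOf_insertIdx_of_le_idxOf h), eraseIdx_insertIdx_self]

theorem idxOf_le_idxOf_erase {a : α} {v : List α} (h : a ∈ v) :
    v.idxOf a ≤ (v.erase a).idxOf a := by
  obtain ⟨l₁, l₂, ha, rfl, herase⟩ := exists_erase_eq h
  simp [herase, idxOf_append, ha]

theorem insertIdx_idxOf_erase {a : α} {v : List α} (h : a ∈ v) :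
    (v.erase a).insertIdx (v.idxOf a) a = v := by
  have hlt := idxOf_lt_length_of_mem h
  rw [erase_eq_eraseIdx_of_idxOf rfl, insertIdx_eraseIdx_self hlt.ne]
  conv_rhs => rw [← set_getElem_self hlt]
  rw [getElem_idxOf hlt]

end List

open Finset

theorem Finset.two_mul_sum_range_sum_range_mul {R : Type*} [CommRing R] (f : ℕ → R) (n : ℕ) :
    2 * ∑ j ∈ range n, (∑ k ∈ range j, f k) * f j
      = (∑ j ∈ range n, f j) ^ 2 - ∑ j ∈ range n, f j ^ 2 := by
  induction n with
  | zero => simp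
  | succ n ih =>
    simp only [sum_range_succ]
    linear_combination ih

theorem MvPolynomial.pderiv_pderiv_comm {σ R : Type*} [CommSemiring R] (i j : σ)
    (f : MvPolynomial σ R) : pderiv i (pderiv j f) = pderiv j (pderiv i f) := by
  classical
  induction f using MvPolynomial.induction_on with
  | C a => simp
  | add p q hp hq => simp [hp, hq]
  | mul_X p n hp => simp [pderiv_X, hp, Pi.single_apply, apply_ite (pderiv _)]; ring

lemma mem_arrangements {v : List ℕ} {M : Multiset ℕ} :
    v ∈ arrangements M ↔ (v : Multiset ℕ) = M := by
  rw [arrangements, List.mem_dedup, List.mem_permutations, ← Multiset.coe_eq_coe,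
    Multiset.coe_toList]

lemma nodup_arrangements (M : Multiset ℕ) : (arrangements M).Nodup := List.nodup_dedup _

lemma length_of_mem_arrangements {v : List ℕ} {M : Multiset ℕ} (h : v ∈ arrangements M) :
    v.length = M.card := by
  rw [← mem_arrangements.1 h, Multiset.coe_card]

lemma forall_lt_of_mem_arrangements {w : List ℕ} {M : Multiset ℕ} {a : ℕ}
    (hM : ∀ x ∈ M, x < a) (hw : w ∈ arrangements M) : ∀ x ∈ w, x < a := fun x hx =>
  hM x (mem_arrangements.1 hw ▸ Multiset.mem_coe.2 hx)

/-- Each arrangement of `a ::ₘ M` arises exactly once by inserting `a` at or before the first `a`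
of an arrangement of `M`; the inverse erases the first `a`. -/
theorem sum_map_arrangements_cons {β : Type*} [AddCommMonoid β] (f : List ℕ → β) (a : ℕ)
    (M : Multiset ℕ) :
    ((arrangements (a ::ₘ M)).map f).sum =
      ((arrangements M).map fun w => ∑ k ∈ range (w.idxOf a + 1), f (w.insertIdx k a)).sum := by
  rw [← List.sum_toFinset _ (nodup_arrangements _), ← List.sum_toFinset _ (nodup_arrangements _),
    sum_sigma']
  have hinv : ∀ v ∈ (arrangements (a ::ₘ M)).toFinset,
      (v.erase a).insertIdx (v.idxOf a) a = v := by
    intro v hv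
    rw [List.mem_toFinset, mem_arrangements] at hv
    exact List.insertIdx_idxOf_erase (by simp [← Multiset.mem_coe, hv])
  refine sum_bij' (fun v _ => ⟨v.erase a, v.idxOf a⟩) (fun p _ => p.1.insertIdx p.2 a)
    ?_ ?_ hinv ?_ (fun v hv => congrArg f (hinv v hv).symm)
  · intro v hv
    rw [List.mem_toFinset, mem_arrangements] at hv
    have ha : a ∈ v := by simp [← Multiset.mem_coe, hv]
    simp only [mem_sigma, List.mem_toFinset, mem_arrangements, mem_range,
      ← Multiset.coe_erase, hv, Multiset.erase_cons_head]
    exact ⟨trivial, Nat.lt_succ_of_le (List.idxOf_le_idxOf_erase ha)⟩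
  · rintro ⟨w, k⟩ hwk
    simp only [mem_sigma, List.mem_toFinset, mem_arrangements, mem_range] at hwk ⊢
    rw [← hwk.1, Multiset.cons_coe, Multiset.coe_eq_coe]
    exact List.perm_insertIdx _ _ (by have := w.idxOf_le_length (a := a); omega)
  · rintro ⟨w, k⟩ hwk
    have hk : k ≤ w.idxOf a := Nat.le_of_lt_succ (mem_range.1 (mem_sigma.1 hwk).2)
    simp [List.erase_insertIdx_of_le_idxOf hk, List.idxOf_insertIdx_of_le_idxOf hk]

/-- Gap `j` of `w` lies between the letters at positions `j` and `j + 1` of `0 :: w ++ [0]`;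
the default value `0` of `getD` supplies the boundary letters. -/
def IsDescentGap (w : List ℕ) (j : ℕ) : Prop := w.getD j 0 < (0 :: w).getD j 0

instance (w : List ℕ) : DecidablePred (IsDescentGap w) := fun _ => Nat.decLt _ _

lemma desAux_cons_eq_sum (a : ℕ) (l : List ℕ) :
    desAux (a :: l) = ∑ j ∈ range l.length, if l.getD j 0 < (a :: l).getD j 0 then 1 else 0 := by
  induction l generalizing a with
  | nil => rfl
  | cons b t ih =>
    change (if b < a then 1 else 0) + desAux (b :: t) = _
    rw [ih, List.length_cons, sum_range_succ', add_comm]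
    simp

lemma des_eq_card (w : List ℕ) :
    des w = #{j ∈ range (w.length + 1) | IsDescentGap w j} := by
  rw [des, desAux_cons_eq_sum, card_filter]
  simp only [← List.cons_append, List.getD_append_singleton_default, IsDescentGap,
    List.length_append, List.length_singleton]

lemma des_le_length_add_one (w : List ℕ) : des w ≤ w.length + 1 :=
  des_eq_card w ▸ (card_filter_le _ _).trans (card_range _).le

lemma sum_range_ite_isDescentGap {M : Type*} [AddCommMonoid M] (w : List ℕ) (p q : M) :
    ∑ j ∈ range (w.length + 1), (if IsDescentGap w j then p else q)
      = des w • p + (w.length + 1 - des w) • q := by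
  rw [sum_ite, sum_const, sum_const, ← des_eq_card, filter_not,
    card_sdiff_of_subset (filter_subset _ _), ← des_eq_card, card_range]

lemma desAux_insertIdx : ∀ (j : ℕ) (t : List ℕ) (b a : ℕ), j ≤ t.length → b ≤ a →
    (∀ x ∈ t, x ≤ a) →
    desAux (b :: (t.insertIdx j a ++ [0])) + (if t.getD j 0 < (b :: t).getD j 0 then 1 else 0)
      = desAux (b :: (t ++ [0])) + (if t.getD j 0 < a then 1 else 0)
  | 0, t, b, a, _, hba, _ => by
    have hcons : ∀ x, desAux (x :: (t ++ [0]))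
        = (if t.getD 0 0 < x then 1 else 0) + desAux (t ++ [0]) := by
      intro x
      rcases t with _ | ⟨y, t⟩ <;> rfl
    change (if a < b then 1 else 0) + desAux (a :: (t ++ [0])) + _ = _
    rw [hcons, hcons, if_neg (by omega)]
    simp only [List.getD_cons_zero]
    omega
  | _ + 1, [], _, _, hj, _, _ => by simp at hj
  | j + 1, x :: t, b, a, hj, _, ht => by
    have ih := desAux_insertIdx j t x a (by simpa using hj) (ht x (by simp))
      (fun y hy => ht y (by simp [hy]))
    change (if x < b then 1 else 0) + desAux (x :: (t.insertIdx j a ++ [0])) + _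
      = (if x < b then 1 else 0) + desAux (x :: (t ++ [0])) + _
    simp only [List.getD_cons_succ] at ih ⊢
    omega

lemma des_insertIdx {w : List ℕ} {a j : ℕ} (hw : ∀ x ∈ w, x ≤ a) (hj : j ≤ w.length) :
    des (w.insertIdx j a) + (if IsDescentGap w j then 1 else 0)
      = des w + (if w.getD j 0 < a then 1 else 0) := by
  simpa [des, IsDescentGap] using desAux_insertIdx j w 0 a hj (Nat.zero_le a) hw

section

local notation "x" => (X 0 : MvPolynomial (Fin 2) ℚ)
local notation "y" => (X 1 : MvPolynomial (Fin 2) ℚ)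

lemma Teul_X_pow_mul_X_pow (d e : ℕ) :
    Teul (x ^ d * y ^ e) = x ^ d * y ^ e * (d * y + e * x) := by
  rcases d with _ | d <;> rcases e with _ | e <;> simp [Teul] <;> ring

lemma Teul_X_one : Teul y = Teul x := by
  simp [Teul]

lemma Teul_list_sum (l : List (MvPolynomial (Fin 2) ℚ)) : Teul l.sum = (l.map Teul).sum := by
  induction l with
  | nil => simp [Teul]
  | cons f l ih =>
    rw [List.sum_cons, List.map_cons, List.sum_cons, ← ih]
    simp only [Teul, map_add]
    ring

lemma Gop_list_sum (l : List (MvPolynomial (Fin 2) ℚ)) : Gop l.sum = (l.map Gop).sum := by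
  induction l with
  | nil => simp [Gop]
  | cons f l ih =>
    rw [List.sum_cons, List.map_cons, List.sum_cons, ← ih]
    simp only [Gop, map_add]
    ring

lemma two_mul_Gop (f : MvPolynomial (Fin 2) ℚ) :
    2 * Gop f = 2 * (x * y ^ 2 * (pderiv 0 f + pderiv 1 f))
      + x ^ 2 * y ^ 2 * (pderiv 0 (pderiv 0 f) + pderiv 1 (pderiv 1 f))
      + 2 * (x ^ 2 * y ^ 2 * pderiv 0 (pderiv 1 f)) := by
  have h2 : (2 : MvPolynomial (Fin 2) ℚ) * C (1 / 2) = 1 := by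
    rw [← map_ofNat C 2, ← C_mul]; norm_num
  rw [Gop]
  linear_combination (x ^ 2 * y ^ 2 * (pderiv 0 (pderiv 0 f) + pderiv 1 (pderiv 1 f))) * h2

lemma two_mul_Gop_X_pow_mul_X_pow (d e : ℕ) :
    2 * Gop (x ^ d * y ^ e) = x ^ d * y ^ e *
      (d * (d + 1) * y ^ 2 + 2 * (d + 1) * e * (x * y) + e * (e - 1) * x ^ 2) := by
  rw [two_mul_Gop]
  rcases d with _ | _ | d <;> rcases e with _ | _ | e <;> simp <;> ring

end

lemma commute_Teul_Gop : Function.Commute Teul Gop := by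
  intro f
  have h2 : ∀ i : Fin 2, pderiv i (2 : MvPolynomial (Fin 2) ℚ) = 0 :=
    fun i => by exact_mod_cast (pderiv i).map_natCast 2
  have hT : ∀ g, Teul (2 * g) = 2 * Teul g := fun g => by simp [Teul, h2]; ring
  apply mul_left_cancel₀ (two_ne_zero : (2 : MvPolynomial (Fin 2) ℚ) ≠ 0)
  rw [← hT, two_mul_Gop, two_mul_Gop]
  simp [Teul, h2, pderiv_pderiv_comm (1 : Fin 2) 0]
  ring

noncomputable def descentMonomial (w : List ℕ) : MvPolynomial (Fin 2) ℚ :=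
  X 0 ^ des w * X 1 ^ (w.length + 1 - des w)

noncomputable def gapWeight (w : List ℕ) (j : ℕ) : MvPolynomial (Fin 2) ℚ :=
  if IsDescentGap w j then X 1 else X 0

lemma sum_range_gapWeight (w : List ℕ) :
    ∑ j ∈ range (w.length + 1), gapWeight w j
      = (des w : MvPolynomial (Fin 2) ℚ) * X 1
        + ((w.length + 1 - des w : ℕ) : MvPolynomial (Fin 2) ℚ) * X 0 := by
  simp only [gapWeight, sum_range_ite_isDescentGap, nsmul_eq_mul]

lemma sum_range_gapWeight_sq (w : List ℕ) :
    ∑ j ∈ range (w.length + 1), gapWeight w j ^ 2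
      = (des w : MvPolynomial (Fin 2) ℚ) * X 1 ^ 2
        + ((w.length + 1 - des w : ℕ) : MvPolynomial (Fin 2) ℚ) * X 0 ^ 2 := by
  simp only [gapWeight, apply_ite (· ^ 2), sum_range_ite_isDescentGap, nsmul_eq_mul]

lemma descentMonomial_insertIdx {w : List ℕ} {a j : ℕ} (hw : ∀ x ∈ w, x ≤ a)
    (hj : j ≤ w.length) (hlt : w.getD j 0 < a) :
    descentMonomial (w.insertIdx j a) = descentMonomial w * gapWeight w j := by
  have hdes := des_insertIdx hw hj
  have hle := des_le_length_add_one w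
  rw [if_pos hlt] at hdes
  simp only [descentMonomial, gapWeight, List.length_insertIdx_of_le_length hj]
  split_ifs at hdes ⊢
  · rw [show des (w.insertIdx j a) = des w by omega,
      show w.length + 1 + 1 - des w = w.length + 1 - des w + 1 by omega]
    ring
  · rw [show des (w.insertIdx j a) = des w + 1 by omega,
      show w.length + 1 + 1 - (des w + 1) = w.length + 1 - des w by omega]
    ring

lemma descentMonomial_insertIdx_of_getD_eq {w : List ℕ} {a j : ℕ} (hw : ∀ x ∈ w, x ≤ a)
    (hj : j < w.length) (heq : w.getD j 0 = a) :
    descentMonomial (w.insertIdx j a) = descentMonomial w * X 1 := by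
  have hdes := des_insertIdx hw hj.le
  have hasc : ¬ IsDescentGap w j := by
    rw [IsDescentGap, heq, not_lt]
    rcases (0 :: w).getD_eq_default_or_mem j 0 with h | h
    · omega
    · exact (List.forall_mem_cons (p := (· ≤ a))).2 ⟨a.zero_le, hw⟩ _ h
  rw [if_neg hasc, heq, if_neg (lt_irrefl a), add_zero, add_zero] at hdes
  simp only [descentMonomial, List.length_insertIdx_of_le_length hj.le, hdes,
    show w.length + 1 + 1 - des w = w.length + 1 - des w + 1 by
      have := des_le_length_add_one w; omega]
  ring

lemma gapWeight_insertIdx_of_lt (w : List ℕ) (a : ℕ) {j k : ℕ} (hk : k < j) :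
    gapWeight (w.insertIdx j a) k = gapWeight w k := by
  simp only [gapWeight, IsDescentGap, ← List.insertIdx_succ_cons,
    List.getD_insertIdx_of_lt _ _ _ hk, List.getD_insertIdx_of_lt _ _ _ (Nat.lt_succ_of_lt hk)]

lemma sum_descentMonomial_insertIdx {w : List ℕ} {a : ℕ} (hw : ∀ x ∈ w, x < a) (ha : 0 < a) :
    ∑ j ∈ range (w.length + 1), descentMonomial (w.insertIdx j a) = Teul (descentMonomial w) := by
  calc ∑ j ∈ range (w.length + 1), descentMonomial (w.insertIdx j a)
      = descentMonomial w * ∑ j ∈ range (w.length + 1), gapWeight w j := by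
        rw [mul_sum]
        exact sum_congr rfl fun j hj => descentMonomial_insertIdx (fun x hx => (hw x hx).le)
          (mem_range_succ_iff.1 hj) (List.getD_lt_of_forall_lt hw ha j)
    _ = Teul (descentMonomial w) := by
        rw [sum_range_gapWeight, descentMonomial, Teul_X_pow_mul_X_pow]

/-- For `k < j` the second copy of `a` lands in gap `k` of `w`; for `k = j` the two copies are
adjacent, which adds a letter but no descent. -/
lemma sum_descentMonomial_insertIdx_insertIdx_le {w : List ℕ} {a j : ℕ}
    (hw : ∀ x ∈ w, x < a) (ha : 0 < a) (hj : j ≤ w.length) :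
    ∑ k ∈ range (j + 1), descentMonomial ((w.insertIdx j a).insertIdx k a)
      = descentMonomial w * gapWeight w j * (∑ k ∈ range j, gapWeight w k + X 1) := by
  set u := w.insertIdx j a
  have hu : ∀ x ∈ u, x ≤ a := fun x hx =>
    ((List.mem_insertIdx hj).1 hx).elim le_of_eq fun h => (hw x h).le
  have hlen : u.length = w.length + 1 := List.length_insertIdx_of_le_length hj a
  have hdu : descentMonomial u = descentMonomial w * gapWeight w j :=
    descentMonomial_insertIdx (fun x hx => (hw x hx).le) hj (List.getD_lt_of_forall_lt hw ha j)
  have hlt : ∀ k ∈ range j,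
      descentMonomial (u.insertIdx k a) = descentMonomial u * gapWeight w k := by
    intro k hk
    have hk := mem_range.1 hk
    have hget : u.getD k 0 = w.getD k 0 := List.getD_insertIdx_of_lt w a 0 hk
    rw [descentMonomial_insertIdx hu (by omega) (hget ▸ List.getD_lt_of_forall_lt hw ha k),
      gapWeight_insertIdx_of_lt w a hk]
  have hself : descentMonomial (u.insertIdx j a) = descentMonomial u * X 1 := by
    refine descentMonomial_insertIdx_of_getD_eq hu (by omega) ?_
    rw [List.getD_eq_getElem _ _ (by omega)]
    exact List.getElem_insertIdx_self _
  rw [sum_range_succ, sum_congr rfl hlt, hself, ← mul_sum, hdu]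
  ring

lemma sum_descentMonomial_insertIdx_insertIdx {w : List ℕ} {a : ℕ} (hw : ∀ x ∈ w, x < a)
    (ha : 0 < a) :
    ∑ j ∈ range (w.length + 1), ∑ k ∈ range (j + 1),
        descentMonomial ((w.insertIdx j a).insertIdx k a) = Gop (descentMonomial w) := by
  rw [sum_congr rfl fun j hj => sum_descentMonomial_insertIdx_insertIdx_le hw ha
    (mem_range_succ_iff.1 hj)]
  have hsplit : ∑ j ∈ range (w.length + 1),
      descentMonomial w * gapWeight w j * (∑ k ∈ range j, gapWeight w k + X 1)
      = descentMonomial w *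
          ∑ j ∈ range (w.length + 1), (∑ k ∈ range j, gapWeight w k) * gapWeight w j
        + descentMonomial w * X 1 * ∑ j ∈ range (w.length + 1), gapWeight w j := by
    rw [mul_sum, mul_sum, ← sum_add_distrib]
    exact sum_congr rfl fun _ _ => by ring
  have htri := two_mul_sum_range_sum_range_mul (gapWeight w) (w.length + 1)
  rw [sum_range_gapWeight, sum_range_gapWeight_sq] at htri
  apply mul_left_cancel₀ (two_ne_zero : (2 : MvPolynomial (Fin 2) ℚ) ≠ 0)
  rw [hsplit, sum_range_gapWeight, descentMonomial, two_mul_Gop_X_pow_mul_X_pow]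
  push_cast [Nat.cast_sub (des_le_length_add_one w)] at htri ⊢
  linear_combination X 0 ^ des w * X 1 ^ (w.length + 1 - des w) * htri

lemma sum_descentMonomial_arrangements_cons {M : Multiset ℕ} {a : ℕ} (hM : ∀ x ∈ M, x < a)
    (ha : 0 < a) :
    ((arrangements (a ::ₘ M)).map descentMonomial).sum
      = Teul ((arrangements M).map descentMonomial).sum := by
  rw [sum_map_arrangements_cons, Teul_list_sum, List.map_map]
  refine congrArg List.sum (List.map_congr_left fun w hw => ?_)
  have hwa := forall_lt_of_mem_arrangements hM hw
  rw [List.idxOf_eq_length fun h => lt_irrefl a (hwa a h)]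
  exact sum_descentMonomial_insertIdx hwa ha

lemma sum_descentMonomial_arrangements_cons_cons {M : Multiset ℕ} {a : ℕ}
    (hM : ∀ x ∈ M, x < a) (ha : 0 < a) :
    ((arrangements (a ::ₘ a ::ₘ M)).map descentMonomial).sum
      = Gop ((arrangements M).map descentMonomial).sum := by
  rw [sum_map_arrangements_cons, sum_map_arrangements_cons, Gop_list_sum, List.map_map]
  refine congrArg List.sum (List.map_congr_left fun w hw => ?_)
  have hwa := forall_lt_of_mem_arrangements hM hw
  have hidx : w.idxOf a = w.length := List.idxOf_eq_length fun h => lt_irrefl a (hwa a h)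
  rw [Function.comp_apply, ← sum_descentMonomial_insertIdx_insertIdx hwa ha, hidx]
  refine sum_congr rfl fun j hj => ?_
  rw [List.idxOf_insertIdx_of_le_idxOf (hidx ▸ mem_range_succ_iff.1 hj)]

lemma msetOf_append_singleton (ms : List ℕ) (k : ℕ) :
    msetOf (ms ++ [k]) = Multiset.replicate k (ms.length + 1) + msetOf ms := by
  have hget : ∀ i ∈ List.range ms.length, List.replicate ((ms ++ [k]).getD i 0) (i + 1)
      = List.replicate (ms.getD i 0) (i + 1) :=
    fun i hi => by rw [List.getD_append _ _ _ _ (List.mem_range.1 hi)]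
  simp only [msetOf, List.length_append, List.length_singleton, List.range_succ,
    List.flatMap_append, List.flatMap_congr hget]
  simp [← Multiset.coe_add, add_comm, Multiset.coe_replicate]

lemma lt_of_mem_msetOf {ms : List ℕ} {x : ℕ} (hx : x ∈ msetOf ms) : x < ms.length + 1 := by
  obtain ⟨i, hi, hx⟩ := List.mem_flatMap.1 (Multiset.mem_coe.1 hx)
  rw [List.eq_of_mem_replicate hx]
  exact Nat.succ_lt_succ (List.mem_range.1 hi)

lemma Abi_eq_sum_descentMonomial (ms : List ℕ) :
    Abi ms = ((arrangements (msetOf ms)).map descentMonomial).sum :=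
  congrArg List.sum <| List.map_congr_left fun w hw => by
    rw [descentMonomial, length_of_mem_arrangements hw]

lemma Abi_nil : Abi [] = X 1 := by
  simp [Abi, msetOf, arrangements, des, desAux]

lemma Abi_append_one (ms : List ℕ) : Abi (ms ++ [1]) = Teul (Abi ms) := by
  rw [Abi_eq_sum_descentMonomial, Abi_eq_sum_descentMonomial, msetOf_append_singleton]
  exact sum_descentMonomial_arrangements_cons (fun _ => lt_of_mem_msetOf) ms.length.succ_pos

lemma Abi_append_two (ms : List ℕ) : Abi (ms ++ [2]) = Gop (Abi ms) := by
  rw [Abi_eq_sum_descentMonomial, Abi_eq_sum_descentMonomial, msetOf_append_singleton]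
  exact sum_descentMonomial_arrangements_cons_cons (fun _ => lt_of_mem_msetOf) ms.length.succ_pos

lemma Abi_eq_iterate {ms : List ℕ} (hms : ∀ i ∈ ms, i = 1 ∨ i = 2) :
    Abi ms = Gop^[ms.count 2] (Teul^[ms.count 1] (X 1)) := by
  induction ms using List.reverseRecOn with
  | nil => simpa using Abi_nil
  | append_singleton ms k ih =>
    rw [List.forall_mem_append, List.forall_mem_singleton] at hms
    rcases hms.2 with rfl | rfl
    · rw [Abi_append_one, ih hms.1, (commute_Teul_Gop.iterate_right _).eq]
      simp [Function.iterate_succ_apply']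
    · rw [Abi_append_two, ih hms.1]
      simp [Function.iterate_succ_apply']

/-- For a multiset with `r` letters of multiplicity 1 and `s` letters of
multiplicity 2, `A_𝐦(x,y) = G^s(T^r(x))`; in particular `A_𝐦(x,y)` depends only
on `r` and `s`, not on the order of the multiplicities. -/
theorem Abi_eq_Gs_Tr (ms : List ℕ) (hms : ∀ i ∈ ms, i = 1 ∨ i = 2)
    (r s : ℕ) (hr : ms.count 1 = r) (hs : ms.count 2 = s) (hrs : 1 ≤ r ∧ 1 ≤ s) :
    Abi ms = Gop^[s] (Teul^[r] (X 0)) ∧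
      ∀ ms' : List ℕ, (∀ i ∈ ms', i = 1 ∨ i = 2) →
        ms'.count 1 = r → ms'.count 2 = s → Abi ms' = Abi ms := by
  obtain ⟨r, rfl⟩ := Nat.exists_eq_add_of_le' hrs.1
  have key : ∀ ms' : List ℕ, (∀ i ∈ ms', i = 1 ∨ i = 2) →
      ms'.count 1 = r + 1 → ms'.count 2 = s → Abi ms' = Gop^[s] (Teul^[r + 1] (X 0)) := by
    intro ms' hms' hr' hs'
    rw [Abi_eq_iterate hms', hr', hs', Function.iterate_succ_apply, Teul_X_one,
      ← Function.iterate_succ_apply]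
  exact ⟨key ms hms hr hs,
    fun ms' hms' hr' hs' => (key ms' hms' hr' hs').trans (key ms hms hr hs).symm⟩
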